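/- arXiv:2405.18045 — 2 statements merged into one kernel-verified Lean document; each statement's English description precedes it below -/
import Mathlib

section
/- Let 1 < M ≤ d+1 and let φ: ℝ → ℝ be increasing and convex, ψ: ℝ → ℝ be increasing with x ↦ ψ(α·φ(x)) convex for every α > 0. Consider the symmetric loss L_sym(U,V) = ½(L_b(U,V) + L_b(V,U)) where L_b(U,V) = (1/M) Σ_{i=1}^M ψ( Σ_{j≠i} [ φ((v_j − v_i)·u_i) + φ((u_j − v_i)·u_i) ] ), minimized over all tuples U = (u_1,…,u_M), V = (v_1,…,v_M) of unit vectors in ℝ^d. Then every configuration with u_i = v_i for all i and ⟨u_i, u_j⟩ = −1/(M−1) for all i ≠ j attains the minimum of L_sym; if φ and ψ are strictly increasing and φ is strictly convex these are the only minimizers. -/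
open scoped BigOperators RealInnerProductSpace

noncomputable section

/-- Generic mini-batch contrastive loss `L_b(U,V;φ,ψ)` (SimCLR/DCL family), where both
views contribute negatives. -/
def Lb (d M : ℕ) (φ ψ : ℝ → ℝ)
    (U V : Fin M → EuclideanSpace ℝ (Fin d)) : ℝ :=
  (1 / (M : ℝ)) *
    ∑ i, ψ (∑ j ∈ Finset.univ.erase i,
      (φ ⟪V j - V i, U i⟫ + φ ⟪U j - V i, U i⟫))

/-- Symmetrised loss `L_sym(U,V) = ½(L_b(U,V) + L_b(V,U))`. -/
def LbSym (d M : ℕ) (φ ψ : ℝ → ℝ)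
    (U V : Fin M → EuclideanSpace ℝ (Fin d)) : ℝ :=
  (Lb d M φ ψ U V + Lb d M φ ψ V U) / 2

/-!
Each summand of `L_b` is `ψ` of a sum of `2(M-1)` values of `φ`. Jensen for `φ` inside each
row, then for the convex `t ↦ ψ(2(M-1) φ(t))` across the `2M` rows of `L_sym`, bounds `L_sym(U,V)`
below by `ψ(2(M-1) φ(m))`, where `m` is the mean of all the inner products fed to `φ`. For unit
vectors `4M(M-1) (m + M/(M-1)) = ‖∑ uᵢ + ∑ vᵢ‖² + (2M-1) ∑ ‖uᵢ - vᵢ‖²`, so `m ≥ -M/(M-1)`, with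
equality for an aligned regular simplex, where every inner product fed to `φ` is `-M/(M-1)`.

In the strict case a minimiser has `m = -M/(M-1)`, hence `U = V` and `∑ uᵢ = 0`; equality in the
row-wise Jensen makes `⟪u_j, u_i⟫` independent of `j ≠ i`, and `∑ uᵢ = 0` pins it to `-1/(M-1)`.
-/

open Finset

section Jensen

variable {ι κ : Type*}

theorem ConvexOn.card_mul_map_sum_div_card_le {f : ℝ → ℝ} (hf : ConvexOn ℝ Set.univ f)
    {t : Finset ι} (ht : t.Nonempty) (x : ι → ℝ) :
    #t * f ((∑ k ∈ t, x k) / #t) ≤ ∑ k ∈ t, f (x k) := by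
  have hcard : (0 : ℝ) < #t := by exact_mod_cast ht.card_pos
  have h := hf.map_sum_le (t := t) (w := fun _ => (#t : ℝ)⁻¹) (p := x)
    (fun _ _ => by positivity) (by simp [hcard.ne']) (fun _ _ => Set.mem_univ _)
  simp only [smul_eq_mul, ← mul_sum] at h
  rw [div_eq_inv_mul, ← le_inv_mul_iff₀ hcard]
  exact h

theorem StrictConvexOn.eq_of_sum_le_card_mul_map_sum_div_card {f : ℝ → ℝ}
    (hf : StrictConvexOn ℝ Set.univ f) {t : Finset ι} (x : ι → ℝ)
    (h : ∑ k ∈ t, f (x k) ≤ #t * f ((∑ k ∈ t, x k) / #t)) :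
    ∀ j ∈ t, ∀ k ∈ t, x j = x k := by
  rcases t.eq_empty_or_nonempty with rfl | ht
  · simp
  have hcard : (0 : ℝ) < #t := by exact_mod_cast ht.card_pos
  refine fun j hj k hk => hf.eq_of_le_map_sum (w := fun _ => (#t : ℝ)⁻¹)
    (fun _ _ => by positivity) (by simp [hcard.ne']) (fun _ _ => Set.mem_univ _) ?_ hj hk
  simp only [smul_eq_mul, ← mul_sum]
  rw [div_eq_inv_mul] at h
  rwa [inv_mul_le_iff₀ hcard]

variable {s : Finset ι} {t : ι → Finset κ} {n : ℕ} {φ ψ : ℝ → ℝ}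

theorem Monotone.map_card_mul_map_sum_div_card_le (hψ : Monotone ψ)
    (hφ : ConvexOn ℝ Set.univ φ) {u : Finset κ} (hu : #u = n) (hn : 0 < n) (y : κ → ℝ) :
    ψ (n * φ ((∑ k ∈ u, y k) / n)) ≤ ψ (∑ k ∈ u, φ (y k)) := by
  subst hu
  exact hψ (hφ.card_mul_map_sum_div_card_le (card_pos.1 hn) y)

theorem ConvexOn.map_sum_sum_div_le (hs : s.Nonempty)
    (hψφ : ConvexOn ℝ Set.univ (fun y => ψ (n * φ y))) (x : ι → κ → ℝ) :
    ψ (n * φ ((∑ i ∈ s, ∑ k ∈ t i, x i k) / (#s * n)))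
      ≤ (∑ i ∈ s, ψ (n * φ ((∑ k ∈ t i, x i k) / n))) / #s := by
  have hcard : (0 : ℝ) < #s := by exact_mod_cast hs.card_pos
  rw [mul_comm (#s : ℝ), ← div_div, sum_div, le_div_iff₀ hcard, mul_comm]
  exact hψφ.card_mul_map_sum_div_card_le hs _

theorem nested_jensen (hs : s.Nonempty) (hn : 0 < n) (ht : ∀ i ∈ s, #(t i) = n)
    (hφ : ConvexOn ℝ Set.univ φ) (hψ : Monotone ψ)
    (hψφ : ConvexOn ℝ Set.univ (fun y => ψ (n * φ y))) (x : ι → κ → ℝ) :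
    ψ (n * φ ((∑ i ∈ s, ∑ k ∈ t i, x i k) / (#s * n)))
      ≤ (∑ i ∈ s, ψ (∑ k ∈ t i, φ (x i k))) / #s := by
  refine (hψφ.map_sum_sum_div_le hs x).trans ?_
  gcongr with i hi
  exact hψ.map_card_mul_map_sum_div_card_le hφ (ht i hi) hn (x i)

theorem eq_of_le_nested_jensen (hs : s.Nonempty) (hn : 0 < n) (ht : ∀ i ∈ s, #(t i) = n)
    (hφ : StrictConvexOn ℝ Set.univ φ) (hψ : StrictMono ψ)
    (hψφ : ConvexOn ℝ Set.univ (fun y => ψ (n * φ y))) (x : ι → κ → ℝ)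
    (h : (∑ i ∈ s, ψ (∑ k ∈ t i, φ (x i k))) / #s
      ≤ ψ (n * φ ((∑ i ∈ s, ∑ k ∈ t i, x i k) / (#s * n)))) :
    ∀ i ∈ s, ∀ k ∈ t i, ∀ k' ∈ t i, x i k = x i k' := by
  have hrow : ∀ i ∈ s, ψ (n * φ ((∑ k ∈ t i, x i k) / n)) ≤ ψ (∑ k ∈ t i, φ (x i k)) :=
    fun i hi => hψ.monotone.map_card_mul_map_sum_div_card_le hφ.convexOn (ht i hi) hn (x i)
  have hcard : (0 : ℝ) < #s := by exact_mod_cast hs.card_pos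
  have hrow_eq := (sum_eq_sum_iff_of_le hrow).1 <| le_antisymm (sum_le_sum hrow)
    ((div_le_div_iff_of_pos_right hcard).1 (h.trans (hψφ.map_sum_sum_div_le hs x)))
  intro i hi
  refine hφ.eq_of_sum_le_card_mul_map_sum_div_card (x i) ?_
  rw [ht i hi, ← hψ.injective (hrow_eq i hi)]

end Jensen

section Configuration

variable {E : Type*} [NormedAddCommGroup E] [InnerProductSpace ℝ E] {M : ℕ}

abbrev negatives (i : Fin M) : Finset (Fin M × Bool) := (univ.erase i) ×ˢ univ

/-- Column `(j, true)` of row `i` is the argument `⟪b_j - b_i, a_i⟫` of `φ` in `L_b(A, B)`, column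
`(j, false)` is `⟪a_j - b_i, a_i⟫`. -/
def crossInner (A B : Fin M → E) (i : Fin M) (k : Fin M × Bool) : ℝ :=
  ⟪(if k.2 then B else A) k.1 - B i, A i⟫

theorem card_negatives (i : Fin M) : #(negatives i) = (M - 1) * 2 := by
  simp [card_product, card_erase_of_mem]

theorem sum_negatives (i : Fin M) (g : Fin M × Bool → ℝ) :
    ∑ k ∈ negatives i, g k = ∑ j ∈ univ.erase i, (g (j, true) + g (j, false)) := by
  rw [sum_product]
  simp only [Fintype.sum_bool]

theorem sum_crossInner (A B : Fin M → E) (hA : ∀ i, ‖A i‖ = 1) :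
    ∑ i, ∑ k ∈ negatives i, crossInner A B i k
      = ⟪∑ i, A i + ∑ i, B i, ∑ i, A i⟫ - (2 * M - 1) * ∑ i, ⟪A i, B i⟫ - M := by
  have hpair : ∀ i j, crossInner A B i (j, true) + crossInner A B i (j, false)
      = ⟪A j + B j, A i⟫ - 2 * ⟪A i, B i⟫ := fun i j => by
    simp only [crossInner, if_true, Bool.false_eq_true, if_false, inner_sub_left, inner_add_left,
      real_inner_comm (A i) (B i)]
    ring
  have hrow : ∀ i, ∑ k ∈ negatives i, crossInner A B i k
      = ⟪∑ j, A j + ∑ j, B j, A i⟫ - (2 * M - 1) * ⟪A i, B i⟫ - 1 := fun i => by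
    rw [sum_negatives, sum_erase_eq_sub (mem_univ i)]
    simp only [hpair, sum_sub_distrib, ← sum_inner, sum_add_distrib, sum_const, card_univ,
      Fintype.card_fin, nsmul_eq_mul, inner_add_left, real_inner_self_eq_norm_sq, hA i,
      real_inner_comm (A i) (B i)]
    ring
  simp only [hrow, sum_sub_distrib, ← inner_sum, ← mul_sum, sum_const, card_univ,
    Fintype.card_fin, nsmul_eq_mul, mul_one]

def symCross (U V : Fin M → E) (r : Bool × Fin M) : Fin M × Bool → ℝ :=
  if r.1 then crossInner U V r.2 else crossInner V U r.2

theorem sum_symCross (U V : Fin M → E) (hU : ∀ i, ‖U i‖ = 1) (hV : ∀ i, ‖V i‖ = 1) :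
    ∑ r, ∑ k ∈ negatives r.2, symCross U V r k
      = ‖∑ i, U i + ∑ i, V i‖ ^ 2 + (2 * M - 1) * ∑ i, ‖U i - V i‖ ^ 2 - 4 * M ^ 2 := by
  have hdist : ∀ i, ‖U i - V i‖ ^ 2 = 2 - 2 * ⟪U i, V i⟫ := fun i => by
    rw [norm_sub_sq_real, hU i, hV i]; ring
  simp only [Fintype.sum_prod_type, Fintype.sum_bool, symCross, if_true, Bool.false_eq_true,
    if_false, sum_crossInner U V hU, sum_crossInner V U hV, hdist, real_inner_comm (V _) (U _),
    ← real_inner_self_eq_norm_sq, inner_add_right, ← mul_sum, sum_sub_distrib, sum_const,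
    card_univ, Fintype.card_fin, nsmul_eq_mul]
  rw [add_comm (∑ i, V i)]
  ring

def symCrossMean (U V : Fin M → E) : ℝ :=
  (∑ r, ∑ k ∈ negatives r.2, symCross U V r k)
    / (#(univ : Finset (Bool × Fin M)) * ((M - 1) * 2 : ℕ))

theorem symCrossMean_add (hM : 1 < M) (U V : Fin M → E) (hU : ∀ i, ‖U i‖ = 1)
    (hV : ∀ i, ‖V i‖ = 1) :
    symCrossMean U V + M / (M - 1)
      = (‖∑ i, U i + ∑ i, V i‖ ^ 2 + (2 * M - 1) * ∑ i, ‖U i - V i‖ ^ 2)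
        / (4 * M * (M - 1)) := by
  have hM' : (1 : ℝ) < M := by exact_mod_cast hM
  rw [symCrossMean, sum_symCross U V hU hV]
  simp only [card_univ, Fintype.card_prod, Fintype.card_bool, Fintype.card_fin]
  push_cast [Nat.cast_sub hM.le]
  field_simp [(by linarith : (M : ℝ) - 1 ≠ 0)]
  ring

theorem neg_div_le_symCrossMean (hM : 1 < M) (U V : Fin M → E) (hU : ∀ i, ‖U i‖ = 1)
    (hV : ∀ i, ‖V i‖ = 1) : -M / (M - 1) ≤ symCrossMean U V := by
  have hM' : (1 : ℝ) < M := by exact_mod_cast hM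
  have h := symCrossMean_add hM U V hU hV
  have : 0 ≤ (‖∑ i, U i + ∑ i, V i‖ ^ 2 + (2 * M - 1) * ∑ i, ‖U i - V i‖ ^ 2)
      / (4 * M * (M - 1)) := by
    apply div_nonneg _ (by nlinarith)
    exact add_nonneg (sq_nonneg _) (mul_nonneg (by linarith) (sum_nonneg fun _ _ => sq_nonneg _))
  rw [neg_div]
  linarith

theorem eq_of_symCrossMean_le (hM : 1 < M) (U V : Fin M → E) (hU : ∀ i, ‖U i‖ = 1)
    (hV : ∀ i, ‖V i‖ = 1) (h : symCrossMean U V ≤ -M / (M - 1)) :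
    (∀ i, U i = V i) ∧ ∑ i, U i = 0 := by
  have hM' : (1 : ℝ) < M := by exact_mod_cast hM
  have hsum := symCrossMean_add hM U V hU hV
  have hdiff : 0 ≤ ∑ i, ‖U i - V i‖ ^ 2 := sum_nonneg fun _ _ => sq_nonneg _
  have hnum : ‖∑ i, U i + ∑ i, V i‖ ^ 2 + (2 * M - 1) * ∑ i, ‖U i - V i‖ ^ 2 ≤ 0 := by
    rw [neg_div] at h
    have : (‖∑ i, U i + ∑ i, V i‖ ^ 2 + (2 * M - 1) * ∑ i, ‖U i - V i‖ ^ 2)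
        / (4 * M * (M - 1)) ≤ 0 := by linarith
    rwa [div_le_iff₀ (by nlinarith), zero_mul] at this
  have hsq : ‖∑ i, U i + ∑ i, V i‖ ^ 2 = 0 := by
    nlinarith [sq_nonneg ‖∑ i, U i + ∑ i, V i‖]
  have hUV : ∀ i, U i = V i := by
    have : ∑ i, ‖U i - V i‖ ^ 2 = 0 := by nlinarith [sq_nonneg ‖∑ i, U i + ∑ i, V i‖]
    intro i
    simpa [sub_eq_zero] using (sum_eq_zero_iff_of_nonneg fun _ _ => sq_nonneg _).1 this i
  refine ⟨hUV, ?_⟩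
  rw [← funext hUV, ← two_smul ℝ, sq_eq_zero_iff, norm_eq_zero, smul_eq_zero] at hsq
  exact hsq.resolve_left two_ne_zero

def simplexLoss (M : ℕ) (φ ψ : ℝ → ℝ) : ℝ := ψ (((M - 1) * 2 : ℕ) * φ (-M / (M - 1)))

theorem simplexLoss_le_map_symCrossMean {φ ψ : ℝ → ℝ} (hM : 1 < M) (hφ : Monotone φ)
    (hψ : Monotone ψ) (U V : Fin M → E) (hU : ∀ i, ‖U i‖ = 1) (hV : ∀ i, ‖V i‖ = 1) :
    simplexLoss M φ ψ ≤ ψ (((M - 1) * 2 : ℕ) * φ (symCrossMean U V)) :=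
  hψ <| by gcongr; exact hφ (neg_div_le_symCrossMean hM U V hU hV)

theorem inner_eq_neg_inv_of_sum_eq_zero (U : Fin M → E) (hU : ∀ i, ‖U i‖ = 1)
    (hsum : ∑ i, U i = 0)
    (hconst : ∀ i, ∀ j ∈ univ.erase i, ∀ j' ∈ univ.erase i, ⟪U j, U i⟫ = ⟪U j', U i⟫) :
    ∀ i j, i ≠ j → ⟪U i, U j⟫ = -1 / ((M : ℝ) - 1) := by
  intro i j hij
  have hrow : ∑ k ∈ univ.erase j, ⟪U k, U j⟫ = -1 := by
    rw [sum_erase_eq_sub (mem_univ j), ← sum_inner, hsum, inner_zero_left,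
      real_inner_self_eq_norm_sq, hU j]
    norm_num
  rw [sum_congr rfl fun k hk => hconst j k hk i (mem_erase.2 ⟨hij, mem_univ i⟩), sum_const,
    card_erase_of_mem (mem_univ j), card_univ, Fintype.card_fin, nsmul_eq_mul,
    Nat.cast_sub (Nat.one_le_of_lt i.isLt), Nat.cast_one] at hrow
  have hne : (M : ℝ) - 1 ≠ 0 := left_ne_zero_of_mul (by rw [hrow]; norm_num)
  rw [eq_div_iff hne, mul_comm, hrow]

theorem exists_linearIsometry_of_finrank_le {F : Type*} [NormedAddCommGroup F]
    [InnerProductSpace ℝ F] [FiniteDimensional ℝ F] [FiniteDimensional ℝ E]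
    (h : Module.finrank ℝ F ≤ Module.finrank ℝ E) : Nonempty (F →ₗᵢ[ℝ] E) := by
  let b := stdOrthonormalBasis ℝ F
  let c := stdOrthonormalBasis ℝ E
  let f := b.toBasis.constr ℝ fun k => c (Fin.castLE h k)
  have hf : Orthonormal ℝ (f ∘ b.toBasis) := by
    have : f ∘ b.toBasis = c ∘ Fin.castLE h := funext fun k => by simp [f]
    rw [this]
    exact c.orthonormal.comp _ (Fin.castLE_injective h)
  exact ⟨f.isometryOfOrthonormal (by rw [b.coe_toBasis]; exact b.orthonormal) hf⟩

theorem exists_regular_simplex [FiniteDimensional ℝ E] (hM : 1 < M)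
    (hME : M ≤ Module.finrank ℝ E + 1) :
    ∃ W : Fin M → E, (∀ i, ‖W i‖ = 1) ∧ ∀ i j, i ≠ j → ⟪W i, W j⟫ = -1 / ((M : ℝ) - 1) := by
  have hM' : (1 : ℝ) < M := by exact_mod_cast hM
  have hM1 : (M : ℝ) - 1 ≠ 0 := by linarith
  -- The centred basis vectors `eᵢ - 𝟙/M` of `ℝ^M` span the hyperplane `𝟙ᗮ` of dimension `M - 1`
  -- and have Gram matrix `I - J/M`; scaled by `√(M/(M-1))` they form the simplex.
  set o : EuclideanSpace ℝ (Fin M) := WithLp.toLp 2 fun _ => 1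
  have ho : ∀ i, o i = 1 := fun _ => rfl
  have hoo : ⟪o, o⟫ = M := by simp only [o, PiLp.inner_apply]; simp
  have hwo : ∀ i, ⟪o, EuclideanSpace.single i 1 - (M : ℝ)⁻¹ • o⟫ = 0 := fun i => by
    rw [inner_sub_right, real_inner_smul_right, hoo, EuclideanSpace.inner_single_right]
    field_simp
    simp [o]
  let w : Fin M → (ℝ ∙ o)ᗮ := fun i => ⟨EuclideanSpace.single i 1 - (M : ℝ)⁻¹ • o,
    Submodule.mem_orthogonal_singleton_iff_inner_right.2 (hwo i)⟩
  have hgram : ∀ i j, ⟪w i, w j⟫ = (if i = j then 1 else 0) - (M : ℝ)⁻¹ := fun i j => by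
    simp only [w, Submodule.coe_inner, inner_sub_left, inner_sub_right, real_inner_smul_left,
      real_inner_smul_right, EuclideanSpace.inner_single_left, EuclideanSpace.inner_single_right,
      PiLp.single_apply, PiLp.smul_apply, smul_eq_mul, hoo, ho, eq_comm (a := j), conj_trivial]
    field_simp
    ring
  have hK : Module.finrank ℝ (ℝ ∙ o)ᗮ ≤ Module.finrank ℝ E := by
    have h1 := Submodule.finrank_add_finrank_orthogonal (ℝ ∙ o)
    rw [finrank_span_singleton (fun h => by simp [h] at hoo; linarith),
      finrank_euclideanSpace_fin] at h1
    omega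
  obtain ⟨L⟩ := exists_linearIsometry_of_finrank_le hK
  set c := √(M / (M - 1) : ℝ)
  have hc : c ^ 2 = M / (M - 1) := Real.sq_sqrt (div_nonneg (by linarith) (by linarith))
  have hW : ∀ i j, ⟪c • L (w i), c • L (w j)⟫
      = M / (M - 1) * ((if i = j then 1 else 0) - (M : ℝ)⁻¹) := fun i j => by
    rw [real_inner_smul_left, real_inner_smul_right, L.inner_map_map, hgram, ← hc]; ring
  refine ⟨fun i => c • L (w i), fun i => ?_, fun i j hij => ?_⟩
  · rw [← sq_eq_sq₀ (norm_nonneg _) zero_le_one, one_pow, ← real_inner_self_eq_norm_sq, hW,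
      if_pos rfl]
    field_simp
  · rw [hW, if_neg hij]
    field_simp
    ring

end Configuration

section Loss

variable {d M : ℕ} {φ ψ : ℝ → ℝ}

theorem Lb_eq_sum_crossInner (A B : Fin M → EuclideanSpace ℝ (Fin d)) :
    Lb d M φ ψ A B = (∑ i, ψ (∑ k ∈ negatives i, φ (crossInner A B i k))) / M := by
  simp only [Lb, sum_negatives, crossInner, if_true, Bool.false_eq_true, if_false]
  ring

theorem LbSym_eq_sum_symCross (U V : Fin M → EuclideanSpace ℝ (Fin d)) :
    LbSym d M φ ψ U V = (∑ r, ψ (∑ k ∈ negatives r.2, φ (symCross U V r k)))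
      / #(univ : Finset (Bool × Fin M)) := by
  simp only [LbSym, Lb_eq_sum_crossInner, Fintype.sum_prod_type, Fintype.sum_bool, symCross,
    if_true, Bool.false_eq_true, if_false, card_univ, Fintype.card_prod, Fintype.card_bool,
    Fintype.card_fin]
  push_cast
  ring

theorem LbSym_of_regular_simplex (hM : 1 < M) (U : Fin M → EuclideanSpace ℝ (Fin d))
    (hU : ∀ i, ‖U i‖ = 1) (hsim : ∀ i j, i ≠ j → ⟪U i, U j⟫ = -1 / ((M : ℝ) - 1)) :
    LbSym d M φ ψ U U = simplexLoss M φ ψ := by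
  have hM' : (1 : ℝ) < M := by exact_mod_cast hM
  have hentry : ∀ r : Bool × Fin M, ∀ k ∈ negatives r.2, symCross U U r k = -M / (M - 1) := by
    rintro ⟨b, i⟩ ⟨j, c⟩ hk
    have hji : j ≠ i := (mem_erase.1 (mem_product.1 hk).1).1
    simp only [symCross, crossInner, ite_self, inner_sub_left, hsim j i hji,
      real_inner_self_eq_norm_sq, hU i]
    field_simp [(by linarith : (M : ℝ) - 1 ≠ 0)]
    ring
  have hcard : (#(univ : Finset (Bool × Fin M)) : ℝ) ≠ 0 := by
    simp only [card_univ, Fintype.card_prod, Fintype.card_bool, Fintype.card_fin]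
    positivity
  have hrow : ∀ r : Bool × Fin M,
      ∑ k ∈ negatives r.2, φ (symCross U U r k) = ((M - 1) * 2 : ℕ) * φ (-M / (M - 1)) :=
    fun r => by
      rw [sum_congr rfl fun k hk => by rw [hentry r k hk], sum_const, card_negatives, nsmul_eq_mul]
  rw [LbSym_eq_sum_symCross, simplexLoss]
  simp only [hrow, sum_const, nsmul_eq_mul]
  field_simp

theorem map_symCrossMean_le_LbSym (hM : 1 < M) (hφ : ConvexOn ℝ Set.univ φ) (hψ : Monotone ψ)
    (hψφ : ∀ α : ℝ, 0 < α → ConvexOn ℝ Set.univ (fun x => ψ (α * φ x)))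
    (U V : Fin M → EuclideanSpace ℝ (Fin d)) :
    ψ (((M - 1) * 2 : ℕ) * φ (symCrossMean U V)) ≤ LbSym d M φ ψ U V := by
  have hn : 0 < (M - 1) * 2 := by omega
  rw [LbSym_eq_sum_symCross, symCrossMean]
  exact nested_jensen ⟨(true, ⟨0, by omega⟩), mem_univ _⟩ hn (fun r _ => card_negatives r.2)
    hφ hψ (hψφ _ (by exact_mod_cast hn)) (symCross U V)

theorem simplexLoss_le_LbSym (hM : 1 < M) (hφmono : Monotone φ)
    (hφconv : ConvexOn ℝ Set.univ φ) (hψmono : Monotone ψ)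
    (hψφconv : ∀ α : ℝ, 0 < α → ConvexOn ℝ Set.univ (fun x => ψ (α * φ x)))
    (U V : Fin M → EuclideanSpace ℝ (Fin d)) (hU : ∀ i, ‖U i‖ = 1) (hV : ∀ i, ‖V i‖ = 1) :
    simplexLoss M φ ψ ≤ LbSym d M φ ψ U V :=
  (simplexLoss_le_map_symCrossMean hM hφmono hψmono U V hU hV).trans
    (map_symCrossMean_le_LbSym hM hφconv hψmono hψφconv U V)

theorem eq_of_LbSym_le_simplexLoss (hM : 1 < M) (hφmono : StrictMono φ)
    (hφconv : StrictConvexOn ℝ Set.univ φ) (hψmono : StrictMono ψ)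
    (hψφconv : ∀ α : ℝ, 0 < α → ConvexOn ℝ Set.univ (fun x => ψ (α * φ x)))
    (U V : Fin M → EuclideanSpace ℝ (Fin d)) (hU : ∀ i, ‖U i‖ = 1) (hV : ∀ i, ‖V i‖ = 1)
    (h : LbSym d M φ ψ U V ≤ simplexLoss M φ ψ) :
    (∀ i, U i = V i) ∧ ∀ i j, i ≠ j → ⟪U i, U j⟫ = -1 / ((M : ℝ) - 1) := by
  have hn : 0 < (M - 1) * 2 := by omega
  have hn' : (0 : ℝ) < ((M - 1) * 2 : ℕ) := by exact_mod_cast hn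
  have hmean : symCrossMean U V ≤ -M / (M - 1) := by
    have := (map_symCrossMean_le_LbSym hM hφconv.convexOn hψmono.monotone hψφconv U V).trans h
    exact hφmono.le_iff_le.1 <| le_of_mul_le_mul_left (hψmono.le_iff_le.1 this) hn'
  obtain ⟨hUV, hsum⟩ := eq_of_symCrossMean_le hM U V hU hV hmean
  have hrows := eq_of_le_nested_jensen ⟨(true, ⟨0, by omega⟩), mem_univ _⟩ hn
    (fun r _ => card_negatives r.2) hφconv hψmono (hψφconv _ hn') (symCross U V) <| by
      rw [← LbSym_eq_sum_symCross, ← symCrossMean]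
      exact h.trans (simplexLoss_le_map_symCrossMean hM hφmono.monotone hψmono.monotone U V hU hV)
  refine ⟨hUV, inner_eq_neg_inv_of_sum_eq_zero U hU hsum fun i j hj j' hj' => ?_⟩
  have := hrows (true, i) (mem_univ _) (j, false) (mem_product.2 ⟨hj, mem_univ _⟩) (j', false)
    (mem_product.2 ⟨hj', mem_univ _⟩)
  simpa [symCross, crossInner, inner_sub_left] using this

end Loss

theorem stmt_1 (d M : ℕ) (hM : 1 < M) (hMd : M ≤ d + 1)
    (φ ψ : ℝ → ℝ)
    (hφmono : Monotone φ) (hφconv : ConvexOn ℝ Set.univ φ)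
    (hψmono : Monotone ψ)
    (hψφconv : ∀ α : ℝ, 0 < α → ConvexOn ℝ Set.univ (fun x => ψ (α * φ x))) :
    -- every aligned regular-simplex configuration attains the minimum
    (∀ U V : Fin M → EuclideanSpace ℝ (Fin d),
        (∀ i, ‖U i‖ = 1) → (∀ i, ‖V i‖ = 1) →
        (∀ i, U i = V i) →
        (∀ i j, i ≠ j → ⟪U i, U j⟫ = -1 / ((M : ℝ) - 1)) →
        ∀ U' V' : Fin M → EuclideanSpace ℝ (Fin d),
          (∀ i, ‖U' i‖ = 1) → (∀ i, ‖V' i‖ = 1) →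
          LbSym d M φ ψ U V ≤ LbSym d M φ ψ U' V') ∧
    -- under strictness, these are the only minimizers
    (StrictMono φ → StrictMono ψ → StrictConvexOn ℝ Set.univ φ →
      ∀ U V : Fin M → EuclideanSpace ℝ (Fin d),
        (∀ i, ‖U i‖ = 1) → (∀ i, ‖V i‖ = 1) →
        (∀ U' V' : Fin M → EuclideanSpace ℝ (Fin d),
          (∀ i, ‖U' i‖ = 1) → (∀ i, ‖V' i‖ = 1) →
          LbSym d M φ ψ U V ≤ LbSym d M φ ψ U' V') →
        (∀ i, U i = V i) ∧
        (∀ i j, i ≠ j → ⟪U i, U j⟫ = -1 / ((M : ℝ) - 1))) := by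
  refine ⟨fun U V hU _ hUV hsim U' V' hU' hV' => ?_, fun hφs hψs hφsc U V hU hV hmin => ?_⟩
  · rw [← funext hUV, LbSym_of_regular_simplex hM U hU hsim]
    exact simplexLoss_le_LbSym hM hφmono hφconv hψmono hψφconv U' V' hU' hV'
  · obtain ⟨W, hW, hWsim⟩ := exists_regular_simplex (E := EuclideanSpace ℝ (Fin d)) hM
      (by rwa [finrank_euclideanSpace_fin])
    have h := hmin W W hW hW
    rw [LbSym_of_regular_simplex hM W hW hWsim] at h
    exact eq_of_LbSym_le_simplexLoss hM hφs hφsc hψs hψφconv U V hU hV h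
end
end

section
/- Let φ : ℝ → ℝ be increasing and convex, and let ψ : ℝ → ℝ be increasing such that x ↦ ψ(α·φ(x)) is convex for every α > 0. Let M ≥ 2 and let u_1,…,u_M, v_1,…,v_M ∈ ℝ^d; set u = Σ_i u_i and v = Σ_i v_i. Then (1/M) Σ_{i=1}^M ψ( Σ_{j≠i} φ((v_j − v_i)·u_i) ) ≥ ψ( (M−1) · φ( (v·u − M Σ_{i=1}^M v_i·u_i) / (M(M−1)) ) ). -/
/-! Jensen's inequality is applied twice. For each anchor `i`, convexity of `φ` bounds the inner
sum of the `M - 1` terms below by `(M - 1) φ(xᵢ / (M - 1))`, where `xᵢ = ∑_{j ≠ i} (vⱼ - vᵢ)·uᵢ`,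
and monotonicity of `ψ` carries this through `ψ`. Convexity of `t ↦ ψ((M - 1) φ(t))` then bounds
the average over `i` below by its value at the mean of the `xᵢ / (M - 1)`, and the `xᵢ` sum to
`v·u - M ∑ᵢ vᵢ·uᵢ`. -/

open Finset
open scoped RealInnerProductSpace

theorem ConvexOn.card_mul_map_sum_div_card_le_s13 {ι : Type*} {D : Set ℝ} {f : ℝ → ℝ}
    (hf : ConvexOn ℝ D f) {s : Finset ι} (hs : s.Nonempty) {p : ι → ℝ}
    (hp : ∀ i ∈ s, p i ∈ D) :
    (#s : ℝ) * f ((∑ i ∈ s, p i) / #s) ≤ ∑ i ∈ s, f (p i) := by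
  have hcard : (0 : ℝ) < #s := by exact_mod_cast hs.card_pos
  have jensen := hf.map_sum_le (w := fun _ => (#s : ℝ)⁻¹) (fun _ _ => by positivity)
    (by rw [sum_const, nsmul_eq_mul, mul_inv_cancel₀ hcard.ne']) hp
  simp only [smul_eq_mul, ← mul_sum] at jensen
  rw [div_eq_inv_mul]
  calc (#s : ℝ) * f ((#s : ℝ)⁻¹ * ∑ i ∈ s, p i)
      ≤ #s * ((#s : ℝ)⁻¹ * ∑ i ∈ s, f (p i)) := by gcongr
    _ = ∑ i ∈ s, f (p i) := by field_simp

theorem sum_sum_erase_inner_sub {ι E : Type*} [Fintype ι] [DecidableEq ι]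
    [NormedAddCommGroup E] [InnerProductSpace ℝ E] (U V : ι → E) :
    ∑ i, ∑ j ∈ univ.erase i, ⟪V j - V i, U i⟫ =
      ⟪∑ i, V i, ∑ i, U i⟫ - Fintype.card ι * ∑ i, ⟪V i, U i⟫ := by
  have row : ∀ i, ∑ j ∈ univ.erase i, ⟪V j - V i, U i⟫ =
      ⟪∑ j, V j, U i⟫ - Fintype.card ι * ⟪V i, U i⟫ := by
    intro i
    rw [sum_erase _ (by simp), sum_inner]
    simp only [inner_sub_left, sum_sub_distrib, sum_const, card_univ, nsmul_eq_mul]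
  simp only [row, sum_sub_distrib, ← mul_sum, ← inner_sum]

theorem stmt_13_general (d M : ℕ) (hM : 2 ≤ M)
    (φ ψ : ℝ → ℝ)
    (hφconv : ConvexOn ℝ Set.univ φ)
    (hψmono : Monotone ψ)
    (hψφconv : ∀ α : ℝ, 0 < α → ConvexOn ℝ Set.univ (fun x => ψ (α * φ x)))
    (U V : Fin M → EuclideanSpace ℝ (Fin d)) :
    (1 / (M : ℝ)) * ∑ i, ψ (∑ j ∈ Finset.univ.erase i, φ ⟪V j - V i, U i⟫) ≥
      ψ (((M : ℝ) - 1) *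
        φ ((⟪∑ i, V i, ∑ i, U i⟫ - (M : ℝ) * ∑ i, ⟪V i, U i⟫) /
          ((M : ℝ) * ((M : ℝ) - 1)))) := by
  have hM₀ : (0 : ℝ) < M := by positivity
  have hM₁ : (0 : ℝ) < M - 1 := by
    rw [sub_pos]; exact_mod_cast hM
  have card_erase : ∀ i : Fin M, (#(univ.erase i) : ℝ) = M - 1 := fun i => by
    rw [card_erase_of_mem (mem_univ i), card_univ, Fintype.card_fin, Nat.cast_pred (by omega)]
  set x : Fin M → ℝ := fun i => (∑ j ∈ univ.erase i, ⟪V j - V i, U i⟫) / (M - 1)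
  have inner_jensen : ∀ i, ψ ((M - 1) * φ (x i)) ≤
      ψ (∑ j ∈ univ.erase i, φ ⟪V j - V i, U i⟫) := fun i => hψmono <| by
    have hne : (univ.erase i).Nonempty := by
      rw [← card_pos, ← Nat.cast_pos (α := ℝ), card_erase]; exact hM₁
    simpa only [card_erase] using
      hφconv.card_mul_map_sum_div_card_le_s13 hne (fun _ _ => Set.mem_univ _)
  have outer_jensen := (hψφconv _ hM₁).card_mul_map_sum_div_card_le_s13 (s := univ)
    ⟨⟨0, by omega⟩, mem_univ _⟩ (p := x) (fun _ _ => Set.mem_univ _)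
  have mean_x : (∑ i, x i) / M = (⟪∑ i, V i, ∑ i, U i⟫ - M * ∑ i, ⟪V i, U i⟫) /
      (M * (M - 1)) := by
    rw [← sum_div, sum_sum_erase_inner_sub, Fintype.card_fin, div_div, mul_comm ((M : ℝ) - 1)]
  rw [card_univ, Fintype.card_fin, mean_x] at outer_jensen
  rw [ge_iff_le, one_div, ← div_eq_inv_mul, le_div_iff₀ hM₀, mul_comm]
  exact outer_jensen.trans (sum_le_sum fun i _ => inner_jensen i)

theorem stmt_13 (d M : ℕ) (hM : 2 ≤ M)
    (φ ψ : ℝ → ℝ)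
    (hφmono : Monotone φ) (hφconv : ConvexOn ℝ Set.univ φ)
    (hψmono : Monotone ψ)
    (hψφconv : ∀ α : ℝ, 0 < α → ConvexOn ℝ Set.univ (fun x => ψ (α * φ x)))
    (U V : Fin M → EuclideanSpace ℝ (Fin d)) :
    (1 / (M : ℝ)) * ∑ i, ψ (∑ j ∈ Finset.univ.erase i, φ ⟪V j - V i, U i⟫) ≥
      ψ (((M : ℝ) - 1) *
        φ ((⟪∑ i, V i, ∑ i, U i⟫ - (M : ℝ) * ∑ i, ⟪V i, U i⟫) /
          ((M : ℝ) * ((M : ℝ) - 1)))) :=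
  stmt_13_general d M hM φ ψ hφconv hψmono hψφconv U V
end
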